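/- Let R be a semiprime right Goldie ring such that the right R-module R_R has couniserial dimension. If u.dim(R_R) = n, then R_R decomposes as a direct sum of n uniform right ideals. -/

import Mathlib

universe u v w

/-- A module is *uniform* if it is nonzero and any two nonzero submodules intersect
nontrivially. -/
def IsUniformModule (R : Type u) [Ring R] (M : Type v) [AddCommGroup M] [Module R M] : Prop :=
  Nontrivial M ∧ ∀ N₁ N₂ : Submodule R M, N₁ ≠ ⊥ → N₂ ≠ ⊥ → N₁ ⊓ N₂ ≠ ⊥

/-- The classes `ζ_α`, defined by transfinite induction: `ζ_1` is the class of uniform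
modules, and for `α > 1`, `M ∈ ζ_α` iff every nonzero submodule `N` of `M` with `N ≇ M`
lies in `ζ_β` for some `β < α`. -/
def ModuleZeta (R : Type u) [Ring R] (α : Ordinal.{v}) (M : Type v) [AddCommGroup M]
    [Module R M] : Prop :=
  (α = 1 ∧ IsUniformModule R M) ∨
    (1 < α ∧ ∀ N : Submodule R M, N ≠ ⊥ → ¬ Nonempty (N ≃ₗ[R] M) →
      ∃ β, ∃ _ : β < α, ModuleZeta R β N)
termination_by α

/-- A module has couniserial dimension iff it lies in `ζ_α` for some ordinal `α`. -/
def HasCUDim (R : Type u) [Ring R] (M : Type v) [AddCommGroup M] [Module R M] : Prop :=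
  ∃ α : Ordinal.{v}, ModuleZeta R α M

open Classical in
/-- The couniserial dimension of a module: the least `α` with `M ∈ ζ_α`, with the
convention that the zero module has couniserial dimension `0`. -/
noncomputable def cuDim (R : Type u) [Ring R] (M : Type v) [AddCommGroup M] [Module R M] :
    Ordinal.{v} :=
  if Subsingleton M then 0 else sInf {α | ModuleZeta R α M}

/-- A submodule is *essential* if it meets every nonzero submodule nontrivially. -/
def IsEssentialSubmodule (R : Type u) [Ring R] {M : Type v} [AddCommGroup M] [Module R M]
    (N : Submodule R M) : Prop :=
  ∀ K : Submodule R M, K ≠ ⊥ → N ⊓ K ≠ ⊥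

/-- A module is *indecomposable* if it is nonzero and is not an (internal) direct sum of two
nonzero submodules. -/
def IsIndecomposableModule (R : Type u) [Ring R] (M : Type v) [AddCommGroup M]
    [Module R M] : Prop :=
  Nontrivial M ∧ ∀ A B : Submodule R M, IsCompl A B → A = ⊥ ∨ B = ⊥

/-- A module is *coHopfian* if it is not isomorphic to a proper submodule of itself. -/
def IsCoHopfianModule (R : Type u) [Ring R] (M : Type v) [AddCommGroup M] [Module R M] : Prop :=
  ∀ N : Submodule R M, Nonempty (M ≃ₗ[R] N) → N = ⊤

/-- A module is *fully coHopfian* if every submodule is coHopfian. -/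
def IsFullyCoHopfianModule (R : Type u) [Ring R] (M : Type v) [AddCommGroup M]
    [Module R M] : Prop :=
  ∀ N : Submodule R M, IsCoHopfianModule R N

/-- A module `N` has the *cancellation property* if `N ⊕ A ≅ N ⊕ B` implies `A ≅ B`. -/
def HasCancellation (R : Type u) [Ring R] (N : Type v) [AddCommGroup N] [Module R N] : Prop :=
  ∀ (A B : Type v) [AddCommGroup A] [Module R A] [AddCommGroup B] [Module R B],
    Nonempty ((N × A) ≃ₗ[R] (N × B)) → Nonempty (A ≃ₗ[R] B)

/-- A module is *Dedekind finite* if it is not isomorphic to a proper direct summand of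
itself. -/
def IsDedekindFiniteModule (R : Type u) [Ring R] (M : Type v) [AddCommGroup M]
    [Module R M] : Prop :=
  ∀ A B : Submodule R M, IsCompl A B → Nonempty (M ≃ₗ[R] A) → B = ⊥

/-- A ring is *semiprime* if it has no nonzero nilpotent two-sided ideal; equivalently,
`a R a = 0` implies `a = 0`. -/
def IsSemiprimeRing (R : Type u) [Ring R] : Prop :=
  ∀ a : R, (∀ x : R, a * x * a = 0) → a = 0

/-- An ideal is an *annihilator ideal* if it is the annihilator of a subset of the ring. -/
def IsAnnihilatorIdeal (R : Type u) [Ring R] (I : Ideal R) : Prop :=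
  ∃ S : Set R, (I : Set R) = {x : R | ∀ s ∈ S, x * s = 0}

/-- A module has *uniform dimension `n`* if it contains `n` independent uniform submodules
whose direct sum is essential. -/
def HasFiniteUniformDim (R : Type u) [Ring R] (M : Type v) [AddCommGroup M] [Module R M]
    (n : ℕ) : Prop :=
  ∃ U : Fin n → Submodule R M, iSupIndep U ∧ (∀ i, IsUniformModule R (U i)) ∧
    IsEssentialSubmodule R (⨆ i, U i)

/-- A ring is *Goldie* if it has the ascending chain condition on annihilator ideals and
finite uniform dimension as a module over itself. -/
def IsGoldieRing (R : Type u) [Ring R] : Prop :=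
  (∀ f : ℕ → Ideal R, (∀ n, IsAnnihilatorIdeal R (f n)) → Monotone f →
      ∃ n, ∀ k, n ≤ k → f k = f n) ∧
    ∃ n : ℕ, HasFiniteUniformDim R R n


/-!
Goldie's argument produces a regular element in the essential left ideal
`E = U₁ ⊕ ⋯ ⊕ Uₙ`: ACC on annihilators and semiprimeness rule out nonzero nil left ideals,
so every nonzero left ideal contains some `a ≠ 0` with `lAnn (a²) = lAnn a`; orthogonal
sequences of such elements span independent principal left ideals, hence have length at
most `n`, and a sequence that cannot be prolonged sums to an element `c` with `lAnn c = 0`.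
Then `R ≅ Rc ⊆ E ⊆ R`. If `R` is not uniform, the least `α` with `R ∈ ζ_α` exceeds `1`,
and `E ≇ R` would put `E`, hence `Rc ≅ R`, into a smaller class; so `E ≅ R`, and this
isomorphism carries the decomposition of `E` onto `R`. If `R` is uniform, then `n = 1`
because uniform dimension is well defined, which holds in every modular lattice by an
exchange argument.
-/

section Lattice

variable {α : Type*} [CompleteLattice α]

def IsEssentialIn (a b : α) : Prop :=
  a ≤ b ∧ ∀ x ≤ b, Disjoint a x → x = ⊥

def IsUniformElement (u : α) : Prop :=
  u ≠ ⊥ ∧ ∀ a ≤ u, ∀ b ≤ u, Disjoint a b → a = ⊥ ∨ b = ⊥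

lemma IsUniformElement.isEssentialIn {u a : α} (hu : IsUniformElement u) (hau : a ≤ u)
    (ha : a ≠ ⊥) : IsEssentialIn a u :=
  ⟨hau, fun x hxu hax => (hu.2 a hau x hxu hax).resolve_left ha⟩

lemma IsUniformElement.of_le {u a : α} (hu : IsUniformElement u) (hau : a ≤ u) (ha : a ≠ ⊥) :
    IsUniformElement a :=
  ⟨ha, fun b hb c hc => hu.2 b (hb.trans hau) c (hc.trans hau)⟩

lemma IsEssentialIn.trans {a b c : α} (hab : IsEssentialIn a b) (hbc : IsEssentialIn b c) :
    IsEssentialIn a c := by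
  refine ⟨hab.1.trans hbc.1, fun x hxc hax => hbc.2 x hxc ?_⟩
  exact disjoint_iff.2 (hab.2 _ inf_le_left (hax.mono_right inf_le_right))

lemma IsEssentialIn.sup_right [IsModularLattice α] {a b d : α} (hab : IsEssentialIn a b)
    (hbd : Disjoint b d) : IsEssentialIn (a ⊔ d) (b ⊔ d) := by
  refine ⟨sup_le_sup_right hab.1 d, fun x hx hadx => ?_⟩
  have hxda : Disjoint (x ⊔ d) a :=
    Disjoint.disjoint_sup_left_of_disjoint_sup_right (hbd.mono_left hab.1).symm
      (by rwa [sup_comm, disjoint_comm])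
  have hxdb : (x ⊔ d) ⊓ b = ⊥ :=
    hab.2 _ inf_le_right (hxda.symm.mono_right inf_le_left)
  have hd : d = x ⊔ d := eq_of_le_of_inf_le_of_sup_le (z := b) le_sup_right (by simp [hxdb])
    (sup_le (sup_le (hx.trans_eq (sup_comm b d)) le_sup_left) le_sup_right)
  exact hadx.symm.eq_bot_of_le ((le_sup_left.trans hd.ge).trans le_sup_right)

lemma IsEssentialIn.sup [IsModularLattice α] {a b c d : α} (hab : IsEssentialIn a b)
    (hcd : IsEssentialIn c d) (hbd : Disjoint b d) : IsEssentialIn (a ⊔ c) (b ⊔ d) := by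
  have hac : IsEssentialIn (a ⊔ c) (a ⊔ d) := by
    simpa only [sup_comm a] using hcd.sup_right (hbd.mono_left hab.1).symm
  exact hac.trans (hab.sup_right hbd)

lemma IsEssentialIn.iSup [IsModularLattice α] {ι : Type*} [Finite ι] {a b : ι → α}
    (hb : iSupIndep b) (hab : ∀ i, IsEssentialIn (a i) (b i)) :
    IsEssentialIn (⨆ i, a i) (⨆ i, b i) := by
  classical
  have := Fintype.ofFinite ι
  suffices ∀ s : Finset ι, IsEssentialIn (⨆ i ∈ s, a i) (⨆ i ∈ s, b i) by
    simpa using this Finset.univ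
  intro s
  induction s using Finset.induction_on with
  | empty => simp [IsEssentialIn]
  | insert i s hi ih =>
    simp only [Finset.iSup_insert]
    exact (hab i).sup ih (hb.disjoint_biSup (y := ↑s) hi)

lemma sup_inf_sup_eq_of_disjoint [IsModularLattice α] {a b u : α} (hab : Disjoint a b)
    (hu : Disjoint (a ⊔ b) u) : (a ⊔ u) ⊓ (b ⊔ u) = u := by
  rw [sup_comm a u, sup_inf_assoc_of_le a (le_sup_right : u ≤ b ⊔ u),
    (hab.disjoint_sup_right_of_disjoint_sup_left hu).eq_bot, sup_bot_eq]

lemma eq_bot_of_sup_inf_eq_bot [IsModularLattice α] {x u c : α} (hx : x ≤ u ⊔ c)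
    (hxu : Disjoint x u) (h : (x ⊔ u) ⊓ c = ⊥) : x = ⊥ := by
  have : x ⊔ u = u :=
    calc x ⊔ u = (u ⊔ c) ⊓ (x ⊔ u) := (inf_eq_right.2 (sup_le hx le_sup_left)).symm
      _ = u ⊔ c ⊓ (x ⊔ u) := sup_inf_assoc_of_le c le_sup_right
      _ = u := by rw [inf_comm, h, sup_bot_eq]
  exact hxu.eq_bot_of_le (sup_eq_right.1 this)

lemma iSupIndep.sup_inf [IsModularLattice α] {ι : Type*} {w : ι → α} (hw : iSupIndep w)
    {u c : α} (hwu : Disjoint (⨆ i, w i) u) (huc : Disjoint u c) :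
    iSupIndep fun i => (w i ⊔ u) ⊓ c := by
  intro i
  set t := ⨆ (j) (_ : j ≠ i), w j
  have hle : ⨆ (j) (_ : j ≠ i), (w j ⊔ u) ⊓ c ≤ (t ⊔ u) ⊓ c :=
    iSup₂_le fun j hj =>
      inf_le_inf_right c (sup_le_sup_right (le_iSup₂ (f := fun j _ => w j) j hj) u)
  have hmeet : (w i ⊔ u) ⊓ (t ⊔ u) = u :=
    sup_inf_sup_eq_of_disjoint (hw i)
      (hwu.mono_left (sup_le (le_iSup w i) (iSup₂_le fun j _ => le_iSup w j)))
  refine Disjoint.mono_right hle (disjoint_iff.2 (le_bot_iff.1 ?_))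
  calc (w i ⊔ u) ⊓ c ⊓ ((t ⊔ u) ⊓ c) ≤ (w i ⊔ u) ⊓ (t ⊔ u) ⊓ c :=
        le_inf (inf_le_inf inf_le_left inf_le_left) (inf_le_left.trans inf_le_right)
    _ = ⊥ := by rw [hmeet, huc.eq_bot]

lemma sup_iSup_succAbove {n : ℕ} (f : Fin (n + 1) → α) (i : Fin (n + 1)) :
    f i ⊔ ⨆ k, f (i.succAbove k) = ⨆ k, f k :=
  le_antisymm (sup_le (le_iSup f i) (iSup_le fun _ => le_iSup f _))
    (iSup_le <| i.succAboveCases le_sup_left fun j =>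
      le_sup_of_le_right (le_iSup (fun k => f (i.succAbove k)) j))

/-- Some `U i` misses `S = W 1 ⊔ ⋯ ⊔ W (n + 1)`, since otherwise `S` would be essential below
`⨆ U` and could not miss `W 0`; projecting `W 1, …, W (n + 1)` along that `U i` into the join of
the other `U`'s then reduces `n` by one. -/
theorem exists_eq_bot_of_iSupIndep_of_le_iSup_uniform [IsModularLattice α] :
    ∀ {n : ℕ} {U : Fin n → α}, iSupIndep U → (∀ i, IsUniformElement (U i)) →
      ∀ {W : Fin (n + 1) → α}, iSupIndep W → (∀ j, W j ≤ ⨆ i, U i) → ∃ j, W j = ⊥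
  | 0, U, _, _, W, _, hWU => ⟨0, le_bot_iff.1 ((hWU 0).trans_eq (iSup_of_empty U))⟩
  | n + 1, U, hU, hUu, W, hW, hWU => by
    by_contra! hW0
    set S := ⨆ j : Fin (n + 1), W j.succ
    have hWS : Disjoint (W 0) S :=
      (hW 0).mono_right (iSup_le fun j => le_iSup₂ (f := fun k _ => W k) j.succ j.succ_ne_zero)
    obtain ⟨i, hi⟩ : ∃ i, Disjoint (U i) S := by
      by_contra! h
      have hess := IsEssentialIn.iSup hU fun i =>
        (hUu i).isEssentialIn inf_le_left fun h0 => h i (disjoint_iff.2 h0)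
      exact hW0 0 (hess.2 _ (hWU 0) (hWS.symm.mono_left (iSup_le fun i => inf_le_right)))
    set C := ⨆ k, U (i.succAbove k)
    have hiC : Disjoint (U i) C :=
      (hU i).mono_right (iSup_le fun k => le_iSup₂ (f := fun k _ => U k) _ (i.succAbove_ne k))
    obtain ⟨j, hj⟩ := exists_eq_bot_of_iSupIndep_of_le_iSup_uniform
      (hU.comp i.succAbove_right_injective) (fun k => hUu _)
      ((hW.comp (Fin.succ_injective _)).sup_inf hi.symm hiC) (fun j => inf_le_right)
    exact hW0 j.succ (eq_bot_of_sup_inf_eq_bot ((hWU j.succ).trans (sup_iSup_succAbove U i).ge)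
      (hi.symm.mono_left (le_iSup (fun j : Fin (n + 1) => W j.succ) j)) hj)

end Lattice

section UniformDimension

variable {R : Type u} [Ring R] {M : Type v} [AddCommGroup M] [Module R M]
  {N : Type w} [AddCommGroup N] [Module R N]

lemma IsUniformModule.of_equiv (h : IsUniformModule R M) (e : M ≃ₗ[R] N) :
    IsUniformModule R N := by
  have : Nontrivial M := h.1
  refine ⟨e.symm.toEquiv.nontrivial, fun N₁ N₂ h₁ h₂ h₁₂ => ?_⟩
  let φ := Submodule.orderIsoMapComap e.symm
  refine h.2 (φ N₁) (φ N₂) (by simpa using h₁) (by simpa using h₂) ?_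
  rw [← φ.map_inf, h₁₂, φ.map_bot]

lemma isUniformModule_submodule_iff (p : Submodule R M) :
    IsUniformModule R p ↔ IsUniformElement p := by
  have hinj : Function.Injective p.subtype := p.injective_subtype
  refine and_congr Submodule.nontrivial_iff_ne_bot
    ⟨fun h a ha b hb hab => ?_, fun h N₁ N₂ h₁ h₂ => ?_⟩
  · have hcomap : ∀ c ≤ p, Submodule.comap p.subtype c = ⊥ → c = ⊥ := fun c hc h0 => by
      rw [← inf_eq_right.2 hc, ← Submodule.map_comap_subtype, h0, Submodule.map_bot]
    by_contra! h0
    refine h (Submodule.comap p.subtype a) (Submodule.comap p.subtype b)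
      (fun h' => h0.1 (hcomap a ha h')) (fun h' => h0.2 (hcomap b hb h')) ?_
    rw [← Submodule.comap_inf, hab.eq_bot, Submodule.comap_bot, p.ker_subtype]
  · intro h₁₂
    have hne : ∀ q : Submodule R p, q ≠ ⊥ → q.map p.subtype ≠ ⊥ := fun q hq h0 =>
      hq (Submodule.map_injective_of_injective hinj (h0.trans (Submodule.map_bot _).symm))
    refine (h _ (Submodule.map_subtype_le p N₁) _ (Submodule.map_subtype_le p N₂)
      (Submodule.disjoint_map hinj (disjoint_iff.2 h₁₂))).elim (hne N₁ h₁) (hne N₂ h₂)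

lemma IsUniformModule.isUniformElement_top (h : IsUniformModule R M) :
    IsUniformElement (⊤ : Submodule R M) :=
  (isUniformModule_submodule_iff ⊤).1 (h.of_equiv Submodule.topEquiv.symm)

lemma HasFiniteUniformDim.le_of_iSupIndep {n k : ℕ} (h : HasFiniteUniformDim R M n)
    {W : Fin k → Submodule R M} (hW : iSupIndep W) (hW0 : ∀ j, W j ≠ ⊥) : k ≤ n := by
  obtain ⟨U, hU, hUu, hess⟩ := h
  by_contra! hnk
  obtain ⟨j, hj⟩ := exists_eq_bot_of_iSupIndep_of_le_iSup_uniform hU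
    (fun i => (isUniformModule_submodule_iff _).1 (hUu i))
    (W := fun j : Fin (n + 1) => W (Fin.castLE hnk j) ⊓ ⨆ i, U i)
    ((hW.comp (Fin.castLE_injective hnk)).mono fun j => inf_le_left) (fun j => inf_le_right)
  exact hess _ (hW0 _) (by rwa [inf_comm])

lemma HasFiniteUniformDim.unique {m n : ℕ} (hm : HasFiniteUniformDim R M m)
    (hn : HasFiniteUniformDim R M n) : m = n := by
  refine le_antisymm ?_ ?_
  · obtain ⟨U, hU, hUu, -⟩ := hm
    exact hn.le_of_iSupIndep hU fun i => Submodule.nontrivial_iff_ne_bot.1 (hUu i).1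
  · obtain ⟨U, hU, hUu, -⟩ := hn
    exact hm.le_of_iSupIndep hU fun i => Submodule.nontrivial_iff_ne_bot.1 (hUu i).1

lemma hasFiniteUniformDim_one (h : IsUniformModule R M) : HasFiniteUniformDim R M 1 :=
  ⟨fun _ => ⊤, iSupIndep_subsingleton _, fun _ => h.of_equiv Submodule.topEquiv.symm,
    fun K hK => by rwa [iSup_const, top_inf_eq]⟩

end UniformDimension

section CouniserialDimension

variable {R : Type u} [Ring R]

lemma ModuleZeta.of_equiv {α : Ordinal.{v}} {M N : Type v} [AddCommGroup M] [Module R M]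
    [AddCommGroup N] [Module R N] (h : ModuleZeta R α M) (e : M ≃ₗ[R] N) :
    ModuleZeta R α N := by
  induction α using WellFoundedLT.induction generalizing M N with
  | _ α ih =>
    rw [ModuleZeta] at h ⊢
    rcases h with ⟨rfl, hu⟩ | ⟨hα, hsub⟩
    · exact Or.inl ⟨rfl, hu.of_equiv e⟩
    · refine Or.inr ⟨hα, fun N' hN' hN'N => ?_⟩
      have e' : N'.map (e.symm : N →ₗ[R] M) ≃ₗ[R] N' := (e.symm.submoduleMap N').symm
      obtain ⟨β, hβ, hz⟩ :=
        hsub _ (by simpa using hN') fun ⟨f⟩ => hN'N ⟨(e'.symm.trans f).trans e⟩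
      exact ⟨β, hβ, ih β hβ hz e'⟩

lemma ModuleZeta.exists_le_of_submodule {α : Ordinal.{v}} {M : Type v} [AddCommGroup M]
    [Module R M] (h : ModuleZeta R α M) {N : Submodule R M} (hN : N ≠ ⊥) :
    ∃ β ≤ α, ModuleZeta R β N := by
  rcases (ModuleZeta.eq_1 R α M).mp h with ⟨rfl, hu⟩ | ⟨hα, hsub⟩
  · refine ⟨1, le_rfl, ?_⟩
    rw [ModuleZeta]
    exact Or.inl
      ⟨rfl, (isUniformModule_submodule_iff N).2 (hu.isUniformElement_top.of_le le_top hN)⟩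
  · by_cases hNM : Nonempty (N ≃ₗ[R] M)
    · exact ⟨α, le_rfl, h.of_equiv hNM.some.symm⟩
    · obtain ⟨β, hβ, hz⟩ := hsub N hN hNM
      exact ⟨β, hβ.le, hz⟩

/-- Minimality of the couniserial dimension: were `B ≇ M`, then `B`, and with it its submodule
`A ≅ M`, would lie in a class `ζ_β` strictly below the least class containing `M`. -/
theorem nonempty_equiv_of_le_of_equiv {M : Type v} [AddCommGroup M] [Module R M]
    (hM : HasCUDim R M) (hnu : ¬ IsUniformModule R M) {A B : Submodule R M} (hAB : A ≤ B)
    (eA : A ≃ₗ[R] M) : Nonempty (B ≃ₗ[R] M) := by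
  by_cases hsub : Subsingleton M
  · exact ⟨LinearEquiv.ofSubsingleton _ _⟩
  rw [not_subsingleton_iff_nontrivial] at hsub
  by_contra hB
  have hmin : ModuleZeta R (sInf {α | ModuleZeta R α M}) M := csInf_mem hM
  rw [ModuleZeta] at hmin
  rcases hmin with ⟨-, hu⟩ | ⟨-, hζ⟩
  · exact hnu hu
  have hA : A ≠ ⊥ := Submodule.nontrivial_iff_ne_bot.1 eA.toEquiv.nontrivial
  obtain ⟨β, hβ, hzB⟩ := hζ B (ne_bot_of_le_ne_bot hA hAB) hB
  have eA' : Submodule.comap B.subtype A ≃ₗ[R] M :=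
    (Submodule.comapSubtypeEquivOfLe hAB).trans eA
  obtain ⟨γ, hγ, hzA⟩ := hzB.exists_le_of_submodule (N := Submodule.comap B.subtype A)
    (Submodule.nontrivial_iff_ne_bot.1 eA'.toEquiv.nontrivial)
  exact (csInf_le' (s := {α | ModuleZeta R α M}) (hzA.of_equiv eA')).not_gt (hγ.trans_lt hβ)

end CouniserialDimension

section Goldie

variable {R : Type u} [Ring R]

/-- `Ideal R` consists of left ideals, so the left annihilators `{x | x * a = 0}` play the role
of the paper's right annihilators. -/
def leftAnnihilator (a : R) : Ideal R :=
  LinearMap.ker (LinearMap.toSpanSingleton R R a)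

@[simp]
lemma mem_leftAnnihilator {a x : R} : x ∈ leftAnnihilator a ↔ x * a = 0 := by
  simp [leftAnnihilator]

lemma isAnnihilatorIdeal_leftAnnihilator (a : R) : IsAnnihilatorIdeal R (leftAnnihilator a) :=
  ⟨{a}, by ext; simp⟩

lemma leftAnnihilator_le_mul (a b : R) : leftAnnihilator a ≤ leftAnnihilator (a * b) :=
  fun x hx => by rw [mem_leftAnnihilator] at hx ⊢; rw [← mul_assoc, hx, zero_mul]

lemma iSupIndep_span_singleton_of_mul_eq_zero {ι : Type*} [LinearOrder ι] [WellFoundedLT ι]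
    {a : ι → R} (horth : ∀ i j, i < j → a j * a i = 0)
    (hsq : ∀ i, leftAnnihilator (a i * a i) ≤ leftAnnihilator (a i)) :
    iSupIndep fun i => R ∙ a i := by
  rw [iSupIndep_iff_finsetSum_eq_zero_imp_eq_zero]
  intro s v hv hsum i
  induction i using WellFoundedLT.induction with
  | _ i ih =>
    intro hi
    obtain ⟨x, hx⟩ := Submodule.mem_span_singleton.1 (hv i hi)
    have hvi : v i * a i = 0 := by
      rw [← zero_mul (a i), ← hsum, Finset.sum_mul, Finset.sum_eq_single_of_mem i hi]
      intro j hj hji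
      rcases hji.lt_or_gt with hlt | hgt
      · rw [ih j hlt hj, zero_mul]
      · obtain ⟨y, hy⟩ := Submodule.mem_span_singleton.1 (hv j hj)
        rw [← hy, smul_eq_mul, mul_assoc, horth i j hgt, mul_zero]
    rw [← hx, smul_eq_mul] at hvi ⊢
    exact mem_leftAnnihilator.1 (hsq i (mem_leftAnnihilator.2 (by rwa [← mul_assoc])))

def IsGoldieSeq (E : Ideal R) (k : ℕ) (a : ℕ → R) : Prop :=
  (∀ i < k, a i ∈ E ∧ a i ≠ 0 ∧ leftAnnihilator (a i * a i) ≤ leftAnnihilator (a i)) ∧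
    ∀ i j, i < j → j < k → a j * a i = 0

lemma IsGoldieSeq.iSupIndep {E : Ideal R} {k : ℕ} {a : ℕ → R} (h : IsGoldieSeq E k a) :
    iSupIndep fun i : Fin k => R ∙ a i :=
  iSupIndep_span_singleton_of_mul_eq_zero (fun i j hij => h.2 i j hij j.2)
    fun i => (h.1 i i.2).2.2

lemma wellFoundedGT_annihilatorIdeal
    (hacc : ∀ f : ℕ → Ideal R, (∀ n, IsAnnihilatorIdeal R (f n)) → Monotone f →
      ∃ n, ∀ k, n ≤ k → f k = f n) :
    WellFoundedGT {I : Ideal R // IsAnnihilatorIdeal R I} := by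
  refine wellFoundedGT_iff_monotone_chain_condition.2 fun f => ?_
  obtain ⟨n, hn⟩ := hacc (fun k => (f k).1) (fun k => (f k).2) fun _ _ h => f.monotone h
  exact ⟨n, fun m hm => Subtype.ext (hn m hm).symm⟩

variable [WellFoundedGT {I : Ideal R // IsAnnihilatorIdeal R I}]

lemma exists_maximal_leftAnnihilator {P : R → Prop} (hP : ∃ x, P x) :
    ∃ a, P a ∧ ∀ b, P b → leftAnnihilator a ≤ leftAnnihilator b →
      leftAnnihilator b ≤ leftAnnihilator a := by
  let ann (x : R) : {I : Ideal R // IsAnnihilatorIdeal R I} :=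
    ⟨leftAnnihilator x, isAnnihilatorIdeal_leftAnnihilator x⟩
  obtain ⟨x, hx⟩ := hP
  obtain ⟨_, ⟨a, ha, rfl⟩, hmax⟩ :=
    WellFoundedGT.exists_maximal inferInstance (ann '' {x | P x}) ⟨ann x, x, hx, rfl⟩
  exact ⟨a, ha, fun b hb hab => hmax ⟨b, hb, rfl⟩ hab⟩

/-- Take `a ∈ N` nonzero with `lAnn a` maximal and let `s = x * a`, which is nilpotent.
Whenever `a * s ^ j ≠ 0`, maximality gives `lAnn (a * s ^ j) = lAnn a`, and this contains
`a * x` once `a * s ^ (j + 1) = 0`; descending in `j` yields `a * x * a = a * s = 0`. -/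
theorem eq_bot_of_forall_isNilpotent (hsp : IsSemiprimeRing R) {N : Ideal R}
    (hN : ∀ x ∈ N, IsNilpotent x) : N = ⊥ := by
  by_contra hN0
  obtain ⟨a, ⟨haN, ha0⟩, hmax⟩ :=
    exists_maximal_leftAnnihilator (P := fun x => x ∈ N ∧ x ≠ 0)
      ((Submodule.ne_bot_iff N).1 hN0)
  refine ha0 (hsp a fun x => ?_)
  set s := x * a
  have hstep (j : ℕ) : a * s ^ (j + 1) = 0 → a * s = 0 := by
    induction j with
    | zero => simp
    | succ j ih =>
      intro hj
      by_cases hj' : a * s ^ (j + 1) = 0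
      · exact ih hj'
      have hmem : a * s ^ (j + 1) ∈ N := by
        rw [pow_succ, show a * (s ^ j * (x * a)) = (a * s ^ j * x) * a by noncomm_ring]
        exact N.smul_mem _ haN
      have hax : a * x ∈ leftAnnihilator (a * s ^ (j + 1)) := by
        rw [mem_leftAnnihilator, ← hj, pow_succ' s (j + 1)]
        simp only [s, mul_assoc]
      have := hmax _ ⟨hmem, hj'⟩ (leftAnnihilator_le_mul _ _) hax
      rwa [mem_leftAnnihilator, mul_assoc] at this
  obtain ⟨m, hm⟩ := hN s (N.smul_mem x haN)
  rw [mul_assoc]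
  exact hstep m (by rw [pow_succ, hm, zero_mul, mul_zero])

theorem exists_mem_ne_zero_leftAnnihilator_mul_self_le (hsp : IsSemiprimeRing R) {I : Ideal R}
    (hI : I ≠ ⊥) : ∃ a ∈ I, a ≠ 0 ∧ leftAnnihilator (a * a) ≤ leftAnnihilator a := by
  have hnil : ∃ x, x ∈ I ∧ ¬ IsNilpotent x := by
    by_contra! h
    exact hI (eq_bot_of_forall_isNilpotent hsp h)
  obtain ⟨a, ⟨haI, ha⟩, hmax⟩ := exists_maximal_leftAnnihilator hnil
  refine ⟨a, haI, fun h => ha (h ▸ IsNilpotent.zero), hmax (a * a) ⟨I.smul_mem a haI, ?_⟩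
    (leftAnnihilator_le_mul a a)⟩
  rw [← pow_two]
  exact fun h => ha h.of_pow

lemma IsGoldieSeq.exists_update (hsp : IsSemiprimeRing R) {E : Ideal R}
    (hE : IsEssentialSubmodule R E) {k : ℕ} {a : ℕ → R} (h : IsGoldieSeq E k a)
    (hc : leftAnnihilator (∑ i ∈ Finset.range k, a i) ≠ ⊥) :
    ∃ b, IsGoldieSeq E (k + 1) (Function.update a k b) := by
  obtain ⟨b, ⟨hbE, hbc⟩, hb0, hbsq⟩ :=
    exists_mem_ne_zero_leftAnnihilator_mul_self_le hsp (hE _ hc)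
  have hba : ∀ i < k, b * a i = 0 := by
    have := (iSupIndep_iff_finsetSum_eq_zero_imp_eq_zero _).1 h.iSupIndep Finset.univ
      (fun i => b * a i) (fun i _ => Submodule.smul_mem _ b (Submodule.mem_span_singleton_self _))
      (by rw [← Finset.mul_sum, Fin.sum_univ_eq_sum_range (fun i => a i)]
          exact mem_leftAnnihilator.1 hbc)
    exact fun i hi => this ⟨i, hi⟩ (Finset.mem_univ _)
  refine ⟨b, fun i hi => ?_, fun i j hij hj => ?_⟩
  · rcases Nat.lt_succ_iff_lt_or_eq.1 hi with hi | rfl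
    · rw [Function.update_of_ne hi.ne]
      exact h.1 i hi
    · rw [Function.update_self]
      exact ⟨hbE, hb0, hbsq⟩
  · rcases Nat.lt_succ_iff_lt_or_eq.1 hj with hj | rfl
    · rw [Function.update_of_ne hj.ne, Function.update_of_ne (hij.trans hj).ne]
      exact h.2 i j hij hj
    · rw [Function.update_self, Function.update_of_ne hij.ne]
      exact hba i hij

theorem exists_mem_leftAnnihilator_eq_bot (hsp : IsSemiprimeRing R) {n : ℕ}
    (hn : HasFiniteUniformDim R R n) {E : Ideal R} (hE : IsEssentialSubmodule R E) :
    ∃ c ∈ E, leftAnnihilator c = ⊥ := by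
  by_contra! hno
  have hseq (k : ℕ) : ∃ a, IsGoldieSeq E k a := by
    induction k with
    | zero => exact ⟨0, by simp [IsGoldieSeq]⟩
    | succ k ih =>
      obtain ⟨a, ha⟩ := ih
      obtain ⟨b, hb⟩ := ha.exists_update hsp hE
        (hno _ (Submodule.sum_mem E fun i hi => (ha.1 i (Finset.mem_range.1 hi)).1))
      exact ⟨_, hb⟩
  obtain ⟨a, ha⟩ := hseq (n + 1)
  have := hn.le_of_iSupIndep ha.iSupIndep fun i => by simpa using (ha.1 i i.2).2.1
  omega

end Goldie

lemma isInternal_comap_of_iSup_eq_range {R : Type u} [Ring R] {M : Type v} [AddCommGroup M]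
    [Module R M] {N : Type w} [AddCommGroup N] [Module R N] {ι : Type*} [DecidableEq ι]
    {f : N →ₗ[R] M} (hf : Function.Injective f) {U : ι → Submodule R M} (hU : iSupIndep U)
    (hUf : ⨆ i, U i = LinearMap.range f) :
    DirectSum.IsInternal (fun i => (U i).comap f) ∧
      ∀ i, Nonempty ((U i).comap f ≃ₗ[R] U i) := by
  have hle (i : ι) : U i ≤ LinearMap.range f := hUf ▸ le_iSup U i
  have hmap (i : ι) : ((U i).comap f).map f = U i := Submodule.map_comap_eq_self (hle i)
  refine ⟨(DirectSum.isInternal_submodule_iff_iSupIndep_and_iSup_eq_top _).2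
    ⟨fun i => ?_, ?_⟩,
    fun i => ⟨(Submodule.equivMapOfInjective f hf _).trans (LinearEquiv.ofEq _ _ (hmap i))⟩⟩
  · refine Disjoint.mono_right (iSup₂_le fun j hj => Submodule.comap_mono
      (le_iSup₂ (f := fun j (_ : j ≠ i) => U j) j hj)) ?_
    rw [disjoint_iff, ← Submodule.comap_inf, (hU i).eq_bot, Submodule.comap_bot,
      LinearMap.ker_eq_bot.2 hf]
  · refine Submodule.map_injective_of_injective hf ?_
    rw [Submodule.map_iSup, Submodule.map_top, ← hUf]
    exact iSup_congr hmap

/-- A semiprime Goldie ring with couniserial dimension and uniform dimension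
`n` decomposes as a direct sum of `n` uniform ideals. -/
theorem stmt13 (R : Type u) [Ring R] (n : ℕ)
    (hsp : IsSemiprimeRing R) (hg : IsGoldieRing R) (h : HasCUDim R R)
    (hn : HasFiniteUniformDim R R n) :
    ∃ V : Fin n → Ideal R, DirectSum.IsInternal V ∧ ∀ i, IsUniformModule R (V i) := by
  by_cases huni : IsUniformModule R R
  · obtain rfl : n = 1 := hn.unique (hasFiniteUniformDim_one huni)
    refine ⟨fun _ => ⊤, ?_, fun _ => huni.of_equiv Submodule.topEquiv.symm⟩
    exact (DirectSum.isInternal_submodule_iff_iSupIndep_and_iSup_eq_top _).2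
      ⟨iSupIndep_subsingleton _, iSup_const⟩
  have := wellFoundedGT_annihilatorIdeal hg.1
  obtain ⟨U, hU, hUu, hess⟩ := hn
  set E := ⨆ i, U i
  obtain ⟨c, hcE, hc⟩ := exists_mem_leftAnnihilator_eq_bot hsp ⟨U, hU, hUu, hess⟩ hess
  let mulc := LinearMap.toSpanSingleton R R c
  have hmulc : Function.Injective mulc := LinearMap.ker_eq_bot.1 hc
  obtain ⟨e⟩ := nonempty_equiv_of_le_of_equiv h huni
    (by rintro _ ⟨x, rfl⟩; exact E.smul_mem x hcE) (LinearEquiv.ofInjective mulc hmulc).symm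
  let f := E.subtype ∘ₗ (e.symm : R →ₗ[R] E)
  obtain ⟨hint, hequiv⟩ := isInternal_comap_of_iSup_eq_range (f := f)
    (Subtype.val_injective.comp e.symm.injective) hU
    (by rw [LinearMap.range_comp_of_range_eq_top _ e.symm.range, Submodule.range_subtype])
  exact ⟨_, hint, fun i => (hUu i).of_equiv (hequiv i).some.symm⟩
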